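/- arXiv:2009.13671 — 2 statements merged into one kernel-verified Lean document; each statement's English description precedes it below -/
import Mathlib

section
/- Define the sequence (p_n)_{n≥1} by p_n = 1/√k if n = 3^k or n = 3^k + 1 for some integer k ≥ 1, and p_n = 0 otherwise. Then ∑_{n=1}^∞ p_n p_{n+1} = ∞; in particular there exists N ≥ 1 with ∑_{n=1}^∞ p_n p_{n+N} = ∞. -/
/-!
Only the adjacent pairs `(3^k, 3^k + 1)` matter: there `pₙ pₙ₊₁ = (1/√k)² = 1/k`, and these
pairs sit at distinct positions `n = 3^k - 1`, so the series dominates the harmonic series.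
-/

open Filter

/-- The sequence `(pₙ)_{n≥1}` of the final Remark: `pₙ = 1/√k` if `n = 3^k` or
`n = 3^k + 1` for some integer `k ≥ 1`, and `pₙ = 0` otherwise. -/
def IsRemarkSeq (p : ℕ → ℝ) : Prop :=
  (∀ n k : ℕ, 1 ≤ k → (n = 3 ^ k ∨ n = 3 ^ k + 1) → p n = 1 / Real.sqrt k) ∧
    ∀ n : ℕ, 1 ≤ n → (∀ k : ℕ, 1 ≤ k → n ≠ 3 ^ k ∧ n ≠ 3 ^ k + 1) → p n = 0

theorem ENNReal.tsum_ofReal_eq_top_of_not_summable {α : Type*} {f : α → ℝ} (hf : ∀ i, 0 ≤ f i)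
    (h : ¬Summable f) : ∑' i, ENNReal.ofReal (f i) = ⊤ := by
  by_contra hne
  refine h ((ENNReal.summable_toReal hne).congr fun i => ?_)
  exact ENNReal.toReal_ofReal (hf i)

theorem ENNReal.tsum_ofReal_one_div_natCast_succ :
    ∑' k : ℕ, ENNReal.ofReal (1 / ((k + 1 : ℕ) : ℝ)) = ⊤ :=
  ENNReal.tsum_ofReal_eq_top_of_not_summable (fun _ => by positivity)
    ((summable_nat_add_iff 1).not.mpr Real.not_summable_one_div_natCast)

theorem injective_pow_succ_sub_one {b : ℕ} (hb : 2 ≤ b) :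
    Function.Injective fun k : ℕ => b ^ (k + 1) - 1 := by
  intro i j hij
  have hi : 1 ≤ b ^ (i + 1) := Nat.one_le_pow _ _ (by omega)
  have hj : 1 ≤ b ^ (j + 1) := Nat.one_le_pow _ _ (by omega)
  have : b ^ (i + 1) = b ^ (j + 1) := by simp only at hij; omega
  exact Nat.succ_injective (Nat.pow_right_injective hb this)

theorem IsRemarkSeq.ofReal_mul_ofReal_of_succ_eq_three_pow {p : ℕ → ℝ} (hp : IsRemarkSeq p)
    {n k : ℕ} (hk : 1 ≤ k) (hn : n + 1 = 3 ^ k) :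
    ENNReal.ofReal (p (n + 1)) * ENNReal.ofReal (p (n + 2)) = ENNReal.ofReal (1 / k) := by
  have h₁ : p (n + 1) = 1 / Real.sqrt k := hp.1 _ k hk (Or.inl hn)
  have h₂ : p (n + 2) = 1 / Real.sqrt k := hp.1 _ k hk (Or.inr (by omega))
  rw [h₁, h₂, ← ENNReal.ofReal_mul (by positivity), div_mul_div_comm, one_mul,
    Real.mul_self_sqrt k.cast_nonneg]

/-- For the Remark sequence, `∑ₙ pₙ pₙ₊₁ = ∞`; in particular there exists `N ≥ 1`
with `∑ₙ pₙ pₙ₊ₙ = ∞`. -/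
theorem remark_sequence_satisfies_a
    (p : ℕ → ℝ) (hp : IsRemarkSeq p) :
    (∑' n : ℕ, ENNReal.ofReal (p (n + 1)) * ENNReal.ofReal (p (n + 2)) = ⊤) ∧
      ∃ N : ℕ, 1 ≤ N ∧
        ∑' n : ℕ, ENNReal.ofReal (p (n + 1)) * ENNReal.ofReal (p (n + 1 + N)) = ⊤ := by
  set g : ℕ → ENNReal := fun n => ENNReal.ofReal (p (n + 1)) * ENNReal.ofReal (p (n + 2))
  have g_at_pair (k : ℕ) : g (3 ^ (k + 1) - 1) = ENNReal.ofReal (1 / ((k + 1 : ℕ) : ℝ)) :=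
    hp.ofReal_mul_ofReal_of_succ_eq_three_pow k.succ_pos
      (Nat.sub_add_cancel (Nat.one_le_pow _ _ three_pos))
  have adjacent : ∑' n, g n = ⊤ := by
    refine top_unique ?_
    calc ⊤ = ∑' k : ℕ, g (3 ^ (k + 1) - 1) := by
          simp only [g_at_pair, ENNReal.tsum_ofReal_one_div_natCast_succ]
      _ ≤ ∑' n, g n :=
          ENNReal.tsum_comp_le_tsum_of_injective (injective_pow_succ_sub_one (by norm_num)) g
  exact ⟨adjacent, 1, le_rfl, adjacent⟩
end

section
/- Define the sequence (p_n)_{n≥1} by p_n = 1/√k if n = 3^k or n = 3^k + 1 for some integer k ≥ 1, and p_n = 0 otherwise. Then limsup_{N→∞} ∑_{n=1}^∞ p_n p_{n+N} = 0; that is, the sums ∑_{n=1}^∞ p_n p_{n+N} converge to 0 as N → ∞. -/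
open Filter

/-!
A product `pₘ pₘ₊ₙ` can only be nonzero when `3^k - 3^j ∈ {N - 1, N, N + 1}` with `1 ≤ j < k`.
Since `3^k - 3^j` lies between `2·3^(k-1)` and `3^k - 3`, the gap `N` determines
`k = log₃ (N + 1) + 1`, so for `N ≥ 2` at most two terms of `∑ₙ pₙ pₙ₊ₙ` survive, each at most
`1 / √(log₃ (N + 1) + 1)`, which tends to `0`.
-/

theorem Nat.tendsto_log_atTop {b : ℕ} (hb : 1 < b) : Tendsto (Nat.log b) atTop atTop :=
  tendsto_atTop_atTop.2 fun k => ⟨b ^ k, fun _ hn => Nat.le_log_of_pow_le hb hn⟩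

theorem log_three_add_one_eq_of_pow_gap {N j k : ℕ} (hj : 1 ≤ j) (hN : 2 ≤ N)
    (h₁ : 3 ^ j + N ≤ 3 ^ k + 1) (h₂ : 3 ^ k ≤ 3 ^ j + N + 1) : Nat.log 3 (N + 1) + 1 = k := by
  have hjk : j < k := Nat.pow_lt_pow_iff_right (by norm_num) |>.1 (by omega : 3 ^ j < 3 ^ k)
  obtain ⟨i, rfl⟩ : ∃ i, k = i + 1 := ⟨k - 1, by omega⟩
  have hji : 3 ^ j ≤ 3 ^ i := Nat.pow_le_pow_right (by norm_num) (by omega)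
  have h3j : 3 ≤ 3 ^ j := Nat.le_self_pow (by omega) 3
  rw [pow_succ] at h₁ h₂
  have hlow : 3 ^ i ≤ N + 1 := by omega
  have hhigh : N + 1 < 3 ^ (i + 1) := by rw [pow_succ]; omega
  rw [Nat.log_eq_of_pow_le_of_lt_pow hlow hhigh]

namespace IsRemarkSeq

variable {p : ℕ → ℝ}

theorem exists_pow_of_ne_zero (hp : IsRemarkSeq p) {m : ℕ} (hm : 1 ≤ m) (h : p m ≠ 0) :
    ∃ k : ℕ, 1 ≤ k ∧ (m = 3 ^ k ∨ m = 3 ^ k + 1) ∧ p m = 1 / Real.sqrt k := by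
  by_contra! hrep
  refine h (hp.2 m hm fun k hk => ?_)
  by_contra! hmk
  exact hrep k hk (by tauto) (hp.1 m k hk (by tauto))

theorem le_one (hp : IsRemarkSeq p) {m : ℕ} (hm : 1 ≤ m) : p m ≤ 1 := by
  by_cases h : p m = 0
  · simp [h]
  obtain ⟨k, hk, -, hpk⟩ := hp.exists_pow_of_ne_zero hm h
  rw [hpk, div_le_one (by positivity), Real.one_le_sqrt]
  exact_mod_cast hk

theorem shift_eq_of_ne_zero (hp : IsRemarkSeq p) {N n : ℕ} (hN : 2 ≤ N)
    (h₁ : p (n + 1) ≠ 0) (h₂ : p (n + 1 + N) ≠ 0) :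
    (n + 1 + N = 3 ^ (Nat.log 3 (N + 1) + 1) ∨ n + 1 + N = 3 ^ (Nat.log 3 (N + 1) + 1) + 1) ∧
      p (n + 1 + N) = 1 / Real.sqrt (Nat.log 3 (N + 1) + 1 : ℕ) := by
  obtain ⟨j, hj, hnj, -⟩ := hp.exists_pow_of_ne_zero (by omega) h₁
  obtain ⟨k, -, hnk, hpk⟩ := hp.exists_pow_of_ne_zero (by omega) h₂
  have hK := log_three_add_one_eq_of_pow_gap (k := k) hj hN (by omega) (by omega)
  rw [hK]
  exact ⟨hnk, hpk⟩

theorem tsum_mul_shift_le (hp : IsRemarkSeq p) {N : ℕ} (hN : 2 ≤ N) :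
    ∑' n, ENNReal.ofReal (p (n + 1)) * ENNReal.ofReal (p (n + 1 + N)) ≤
      2 * ENNReal.ofReal (1 / Real.sqrt (Nat.log 3 (N + 1) + 1 : ℕ)) := by
  set f : ℕ → ENNReal := fun n => ENNReal.ofReal (p (n + 1)) * ENNReal.ofReal (p (n + 1 + N))
  set K := Nat.log 3 (N + 1) + 1 with hK
  set S : Finset ℕ := {3 ^ K - (N + 1), 3 ^ K - N}
  have key : ∀ n, f n ≠ 0 → n ∈ S ∧ f n ≤ ENNReal.ofReal (1 / Real.sqrt K) := by
    intro n hn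
    have h₁ : p (n + 1) ≠ 0 := fun h => hn (by simp [f, h])
    have h₂ : p (n + 1 + N) ≠ 0 := fun h => hn (by simp [f, h])
    obtain ⟨hpow, hval⟩ := hp.shift_eq_of_ne_zero hN h₁ h₂
    rw [← hK] at hpow hval
    refine ⟨by simp only [S, Finset.mem_insert, Finset.mem_singleton]; omega, ?_⟩
    calc f n ≤ ENNReal.ofReal 1 * ENNReal.ofReal (p (n + 1 + N)) := by
          simp only [f]; gcongr; exact hp.le_one (by omega)
      _ = ENNReal.ofReal (1 / Real.sqrt K) := by rw [hval, ENNReal.ofReal_one, one_mul]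
  calc ∑' n, f n = ∑ n ∈ S, f n := tsum_eq_sum fun n hn => by_contra fun h => hn (key n h).1
    _ ≤ S.card • ENNReal.ofReal (1 / Real.sqrt K) :=
        Finset.sum_le_card_nsmul _ _ _ fun n _ =>
          (eq_or_ne (f n) 0).elim (fun h => h.trans_le zero_le) fun h => (key n h).2
    _ ≤ 2 * ENNReal.ofReal (1 / Real.sqrt K) := by
        rw [nsmul_eq_mul]
        gcongr
        exact_mod_cast Finset.card_le_two

end IsRemarkSeq

theorem tendsto_inv_sqrt_log_three :
    Tendsto (fun N : ℕ => 2 * ENNReal.ofReal (1 / Real.sqrt (Nat.log 3 (N + 1) + 1 : ℕ)))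
      atTop (nhds 0) := by
  have hK : Tendsto (fun N : ℕ => Nat.log 3 (N + 1) + 1) atTop atTop :=
    (tendsto_add_atTop_nat 1).comp <|
      (Nat.tendsto_log_atTop (by norm_num)).comp (tendsto_add_atTop_nat 1)
  have hinv : Tendsto (fun N : ℕ => 1 / Real.sqrt (Nat.log 3 (N + 1) + 1 : ℕ)) atTop (nhds 0) := by
    simpa only [one_div, Function.comp_def] using tendsto_inv_atTop_zero.comp
      (Real.tendsto_sqrt_atTop.comp (tendsto_natCast_atTop_atTop.comp hK))
  simpa using ENNReal.Tendsto.const_mul (ENNReal.tendsto_ofReal hinv) (Or.inr ENNReal.ofNat_ne_top)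

/-- For the Remark sequence, `limsup_{N→∞} ∑ₙ pₙ pₙ₊ₙ = 0`; indeed the sums
`∑ₙ pₙ pₙ₊ₙ` converge to `0` as `N → ∞`. -/
theorem remark_sequence_fails_b
    (p : ℕ → ℝ) (hp : IsRemarkSeq p) :
    Filter.limsup
        (fun N : ℕ => ∑' n : ℕ, ENNReal.ofReal (p (n + 1)) * ENNReal.ofReal (p (n + 1 + N)))
        atTop = 0 ∧
      Tendsto
        (fun N : ℕ => ∑' n : ℕ, ENNReal.ofReal (p (n + 1)) * ENNReal.ofReal (p (n + 1 + N)))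
        atTop (nhds 0) := by
  have htend : Tendsto
      (fun N : ℕ => ∑' n : ℕ, ENNReal.ofReal (p (n + 1)) * ENNReal.ofReal (p (n + 1 + N)))
      atTop (nhds 0) :=
    tendsto_of_tendsto_of_tendsto_of_le_of_le' tendsto_const_nhds tendsto_inv_sqrt_log_three
      (Eventually.of_forall fun _ => zero_le)
      ((eventually_ge_atTop 2).mono fun _ hN => hp.tsum_mul_shift_le hN)
  exact ⟨htend.limsup_eq, htend⟩
end
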